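/- arXiv:2102.03977 — 4 statements merged into one kernel-verified Lean document; each statement's English description precedes it below -/
import Mathlib

section
/- Let V be a finite set of n ≥ 3 nodes, let k ≥ 1 be an integer, and draw a random subset S ⊆ V by Bernoulli sampling with rate p = m/n, where m is an integer with 10·k·ln n ≤ m ≤ n. Then for every subset C ⊆ V with |C| ≥ n/k, with probability at least 1 − n^{−5/4} one has |S ∩ C| ≥ 5·ln n. -/
/-- The probability that the Bernoulli-`p` random subset of the finite type `V`
(each node included independently with probability `p`) equals `S`. -/
noncomputable def bernoulliWeight {V : Type*} [Fintype V] [DecidableEq V]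
    (p : ℝ) (S : Finset V) : ℝ :=
  p ^ S.card * (1 - p) ^ (Fintype.card V - S.card)

open Classical in
/-- Probability of the event `A` under Bernoulli-`p` sampling of a subset of `V`. -/
noncomputable def prEvent {V : Type*} [Fintype V] [DecidableEq V]
    (p : ℝ) (A : Finset V → Prop) : ℝ :=
  ∑ S : Finset V, if A S then bernoulliWeight p S else 0

lemma sum_weight {V : Type*} [Fintype V] [DecidableEq V] (C : Finset V) (p r : ℝ) :
    ∑ S : Finset V, r ^ (S ∩ C).card * bernoulliWeight p S
      = (r * p + (1 - p)) ^ C.card := by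
  have h := Finset.prod_add (fun v : V => if v ∈ C then r * p else p)
      (fun _ => 1 - p) Finset.univ
  have hL : (∏ v ∈ Finset.univ, ((if v ∈ C then r * p else p) + (1 - p)))
      = (r * p + (1 - p)) ^ C.card := by
    have : ∀ v : V, ((if v ∈ C then r * p else p) + (1 - p))
        = (if v ∈ C then r * p + (1 - p) else 1) := by
      intro v; split <;> ring
    rw [Finset.prod_congr rfl (fun v _ => this v), Finset.prod_ite_mem,
      Finset.univ_inter, Finset.prod_const]
  have hR : ∀ S : Finset V,
      ((∏ v ∈ S, (if v ∈ C then r * p else p)) * ∏ v ∈ Finset.univ \ S, (1 - p))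
        = r ^ (S ∩ C).card * bernoulliWeight p S := by
    intro S
    have h1 : (∏ v ∈ S, (if v ∈ C then r * p else p))
        = r ^ (S ∩ C).card * p ^ S.card := by
      have : ∀ v ∈ S, (if v ∈ C then r * p else p) = (if v ∈ C then r else 1) * p := by
        intro v _; split <;> ring
      rw [Finset.prod_congr rfl this, Finset.prod_mul_distrib, Finset.prod_const,
        Finset.prod_ite_mem, Finset.prod_const]
    have h2 : (∏ v ∈ Finset.univ \ S, (1 - p)) = (1 - p) ^ (Fintype.card V - S.card) := by
      rw [Finset.prod_const, ← Finset.compl_eq_univ_sdiff, Finset.card_compl]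
    rw [h1, h2, bernoulliWeight, mul_assoc]
  rw [hL, Finset.powerset_univ] at h
  rw [← Finset.sum_congr rfl (fun S _ => hR S), ← h]

/-- Lemma 1: with `p = m/n`, `10·k·ln n ≤ m ≤ n` and `|C| ≥ n/k`,
with probability at least `1 − n^(−5/4)` one has `|S ∩ C| ≥ 5·ln n`. -/
theorem stmt_1 {V : Type*} [Fintype V] [DecidableEq V]
    (n : ℕ) (hn : Fintype.card V = n) (hn3 : 3 ≤ n)
    (k : ℕ) (hk : 1 ≤ k)
    (m : ℕ) (hm₁ : 10 * k * Real.log n ≤ (m : ℝ)) (hm₂ : m ≤ n)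
    (C : Finset V) (hC : (n : ℝ) / k ≤ C.card) :
    1 - (n : ℝ) ^ (-(5 / 4 : ℝ)) ≤
      prEvent ((m : ℝ) / n) (fun S => 5 * Real.log n ≤ ((S ∩ C).card : ℝ)) := by
  classical
  set p : ℝ := (m : ℝ) / n with hp
  have hnpos : (0:ℝ) < n := by positivity
  have hkpos : (0:ℝ) < k := by exact_mod_cast hk
  have hln : (0:ℝ) ≤ Real.log n := Real.log_nonneg (by exact_mod_cast le_trans (by norm_num) hn3)
  have hp0 : 0 ≤ p := by positivity
  have hp1 : p ≤ 1 := by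
    rw [hp, div_le_one hnpos]; exact_mod_cast hm₂
  have hw0 : ∀ S : Finset V, 0 ≤ bernoulliWeight p S := by
    intro S
    have : (0:ℝ) ≤ 1 - p := by linarith
    unfold bernoulliWeight; positivity
  set t : ℝ := 5 * Real.log n with ht
  set bad : ℝ := ∑ S : Finset V, if ¬ (t ≤ ((S ∩ C).card : ℝ)) then bernoulliWeight p S else 0
    with hbad
  -- total mass is 1
  have htotal : ∑ S : Finset V, bernoulliWeight p S = 1 := by
    have := sum_weight C p 1
    simpa using this
  -- split
  have hsplit : prEvent p (fun S => t ≤ ((S ∩ C).card : ℝ)) = 1 - bad := by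
    rw [eq_sub_iff_add_eq, prEvent, hbad, ← Finset.sum_add_distrib, ← htotal]
    refine Finset.sum_congr rfl (fun S _ => ?_)
    by_cases h : t ≤ ((S ∩ C).card : ℝ) <;> simp [h]
  -- bound bad
  have hpoint : ∀ S : Finset V,
      (if ¬ (t ≤ ((S ∩ C).card : ℝ)) then bernoulliWeight p S else 0)
        ≤ (2:ℝ) ^ t * ((1/2:ℝ) ^ (S ∩ C).card * bernoulliWeight p S) := by
    intro S
    split
    · next h =>
      push_neg at h
      have h2 : (1:ℝ) ≤ (2:ℝ) ^ t * (1/2:ℝ) ^ (S ∩ C).card := by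
        have e1 : ((1:ℝ)/2) ^ (S ∩ C).card = (2:ℝ) ^ (-((S ∩ C).card : ℝ)) := by
          rw [Real.rpow_neg (by norm_num), Real.rpow_natCast]
          simp [one_div, inv_pow]
        rw [e1, ← Real.rpow_add (by norm_num)]
        have : (0:ℝ) ≤ t + -((S ∩ C).card : ℝ) := by linarith
        calc (1:ℝ) = (2:ℝ) ^ (0:ℝ) := by simp
          _ ≤ _ := Real.rpow_le_rpow_of_exponent_le (by norm_num) this
      calc bernoulliWeight p S = 1 * bernoulliWeight p S := by ring
        _ ≤ ((2:ℝ) ^ t * (1/2:ℝ) ^ (S ∩ C).card) * bernoulliWeight p S :=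
            mul_le_mul_of_nonneg_right h2 (hw0 S)
        _ = _ := by ring
    · exact mul_nonneg (by positivity) (mul_nonneg (by positivity) (hw0 S))
  have hbadle : bad ≤ (2:ℝ) ^ t * (1 - p/2) ^ C.card := by
    calc bad ≤ ∑ S : Finset V, (2:ℝ) ^ t * ((1/2:ℝ) ^ (S ∩ C).card * bernoulliWeight p S) :=
          Finset.sum_le_sum (fun S _ => hpoint S)
      _ = (2:ℝ) ^ t * ((1/2 : ℝ) * p + (1 - p)) ^ C.card := by
          rw [← Finset.mul_sum, sum_weight]
      _ = (2:ℝ) ^ t * (1 - p/2) ^ C.card := by ring_nf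
  -- exponential bound
  have hcp : 10 * Real.log n ≤ (C.card : ℝ) * p := by
    have h1 : 10 * Real.log n ≤ (m:ℝ) / k := by
      rw [le_div_iff₀ hkpos]; linarith [hm₁]
    have h2 : (n:ℝ)/k * p = (m:ℝ)/k := by
      rw [hp]; field_simp
    have h3 : (n:ℝ)/k * p ≤ (C.card : ℝ) * p := mul_le_mul_of_nonneg_right hC hp0
    linarith
  have hexp : (2:ℝ) ^ t * (1 - p/2) ^ C.card ≤ (n:ℝ) ^ (-(5/4 : ℝ)) := by
    have e1 : (2:ℝ) ^ t = Real.exp (Real.log 2 * t) := Real.rpow_def_of_pos (by norm_num) t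
    have e2 : (1 - p/2) ^ C.card ≤ Real.exp ((C.card : ℝ) * (-(p/2))) := by
      rw [Real.exp_nat_mul]
      apply pow_le_pow_left₀ (by linarith)
      linarith [Real.add_one_le_exp (-(p/2))]
    have e3 : (n:ℝ) ^ (-(5/4 : ℝ)) = Real.exp (Real.log n * (-(5/4))) :=
      Real.rpow_def_of_pos hnpos _
    calc (2:ℝ) ^ t * (1 - p/2) ^ C.card
        ≤ Real.exp (Real.log 2 * t) * Real.exp ((C.card : ℝ) * (-(p/2))) := by
          rw [e1]
          apply mul_le_mul_of_nonneg_left e2 (Real.exp_nonneg _)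
      _ = Real.exp (Real.log 2 * t + (C.card : ℝ) * (-(p/2))) := (Real.exp_add _ _).symm
      _ ≤ Real.exp (Real.log n * (-(5/4))) := by
          apply Real.exp_le_exp.mpr
          have hl2 : Real.log 2 < 0.6931471808 := Real.log_two_lt_d9
          nlinarith [hcp, hln]
      _ = (n:ℝ) ^ (-(5/4 : ℝ)) := e3.symm
  rw [hsplit]
  linarith
end

section
/- Let V be a finite set of n ≥ 3 nodes partitioned into ground-truth clusters C₁*, …, C_k*, and draw a random subset S ⊆ V by Bernoulli sampling with rate p = m/n, where m is an integer with 10·k·ln n ≤ m ≤ n. Then with probability at least 1 − k·n^{−5/4}, simultaneously for every index i with |C_i*| ≥ n/k one has |S ∩ C_i*| ≥ 5·ln n. -/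
lemma mgf {V : Type*} [Fintype V] [DecidableEq V] (p r : ℝ) (C : Finset V) :
    ∑ S : Finset V, bernoulliWeight p S * r ^ (S ∩ C).card
      = (p * r + (1 - p)) ^ C.card := by
  classical
  have h := Finset.prod_add (f := fun v : V => p * (if v ∈ C then r else 1))
    (g := fun _ : V => 1 - p) (s := Finset.univ)
  have hL : ∏ v : V, (p * (if v ∈ C then r else 1) + (1 - p))
      = (p * r + (1 - p)) ^ C.card := by
    have : ∀ v : V, p * (if v ∈ C then r else 1) + (1 - p)
        = (if v ∈ C then p * r + (1 - p) else 1) := by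
      intro v; split <;> ring
    rw [Finset.prod_congr rfl (fun v _ => this v), Finset.prod_ite_mem,
      Finset.univ_inter, Finset.prod_const]
  have hR : ∀ S : Finset V,
      (∏ v ∈ S, p * (if v ∈ C then r else 1)) * (∏ v ∈ Finset.univ \ S, (1 - p))
      = bernoulliWeight p S * r ^ (S ∩ C).card := by
    intro S
    rw [Finset.prod_mul_distrib, Finset.prod_const, Finset.prod_const,
      Finset.card_univ_diff, ← Finset.prod_filter, Finset.prod_const,
      Finset.filter_mem_eq_inter, bernoulliWeight]
    ring
  rw [hL] at h
  rw [h, Finset.powerset_univ]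
  exact Finset.sum_congr rfl (fun S _ => (hR S).symm)

lemma weight_nonneg {V : Type*} [Fintype V] [DecidableEq V] {p : ℝ}
    (hp0 : 0 ≤ p) (hp1 : p ≤ 1) (S : Finset V) : 0 ≤ bernoulliWeight p S := by
  have h1 : (0:ℝ) ≤ 1 - p := by linarith
  unfold bernoulliWeight; positivity

lemma weight_total {V : Type*} [Fintype V] [DecidableEq V] (p : ℝ) :
    ∑ S : Finset V, bernoulliWeight p S = 1 := by
  have h := mgf (V := V) p 1 (∅ : Finset V)
  simpa using h

open Classical in
lemma per_cluster {V : Type*} [Fintype V] [DecidableEq V] {p : ℝ}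
    (hp0 : 0 ≤ p) (hp1 : p ≤ 1) (C : Finset V) {t : ℝ} (ht0 : 0 ≤ t)
    (hμ : 10 * t ≤ p * C.card) :
    prEvent p (fun S => ¬ (5 * t ≤ ((S ∩ C).card : ℝ))) ≤ Real.exp (-(5/4) * t) := by
  classical
  set μ := p * (C.card : ℝ) with hμdef
  have hw := fun S : Finset V => weight_nonneg hp0 hp1 (p := p) S
  have hexp : (0:ℝ) < Real.exp (Real.log 2 * (μ/2)) := Real.exp_pos _
  -- pointwise indicator bound
  have key : ∀ S : Finset V,
      (if ¬ (5*t ≤ ((S ∩ C).card:ℝ)) then bernoulliWeight p S else 0)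
      ≤ Real.exp (Real.log 2 * (μ/2)) * (bernoulliWeight p S * ((1:ℝ)/2) ^ (S ∩ C).card) := by
    intro S
    have hhalf : ((1:ℝ)/2) ^ (S ∩ C).card
        = Real.exp (-(Real.log 2) * ((S ∩ C).card : ℝ)) := by
      have hb : ((1:ℝ)/2) = Real.exp (-Real.log 2) := by
        rw [Real.exp_neg, Real.exp_log (by norm_num : (0:ℝ) < 2)]; norm_num
      rw [hb, ← Real.exp_nat_mul]
      congr 1; ring
    split
    case isTrue h =>
      push_neg at h
      have hX : ((S ∩ C).card : ℝ) ≤ μ/2 := by nlinarith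
      have hone : (1:ℝ) ≤ Real.exp (Real.log 2 * (μ/2)) * ((1:ℝ)/2) ^ (S ∩ C).card := by
        rw [hhalf, ← Real.exp_add]
        apply Real.one_le_exp
        have hlog2 : (0:ℝ) ≤ Real.log 2 := Real.log_nonneg (by norm_num)
        nlinarith
      nlinarith [hw S]
    case isFalse h =>
      have : (0:ℝ) ≤ ((1:ℝ)/2) ^ (S ∩ C).card := by positivity
      have := hw S
      positivity
  -- sum up
  have hsum : prEvent p (fun S => ¬ (5 * t ≤ ((S ∩ C).card : ℝ)))
      ≤ Real.exp (Real.log 2 * (μ/2)) * (1 - p/2) ^ C.card := by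
    have h2 : ∑ S : Finset V, Real.exp (Real.log 2 * (μ/2)) *
        (bernoulliWeight p S * ((1:ℝ)/2) ^ (S ∩ C).card)
        = Real.exp (Real.log 2 * (μ/2)) * (1 - p/2) ^ C.card := by
      rw [← Finset.mul_sum, mgf]
      congr 2; ring
    calc prEvent p (fun S => ¬ (5 * t ≤ ((S ∩ C).card : ℝ)))
        ≤ ∑ S : Finset V, Real.exp (Real.log 2 * (μ/2)) *
            (bernoulliWeight p S * ((1:ℝ)/2) ^ (S ∩ C).card) := by
          unfold prEvent
          refine Finset.sum_le_sum fun S _ => ?_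
          convert key S using 2
          rfl
      _ = _ := h2
  have hpow : (1 - p/2) ^ C.card ≤ Real.exp (-(μ/2)) := by
    have h1 : (0:ℝ) ≤ 1 - p/2 := by linarith
    have h2 : 1 - p/2 ≤ Real.exp (-(p/2)) := by
      have := Real.add_one_le_exp (-(p/2)); linarith
    calc (1 - p/2) ^ C.card ≤ (Real.exp (-(p/2))) ^ C.card :=
          pow_le_pow_left₀ h1 h2 _
      _ = Real.exp ((C.card : ℝ) * (-(p/2))) := (Real.exp_nat_mul _ _).symm
      _ = Real.exp (-(μ/2)) := by rw [hμdef]; ring_nf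
  have hfinal : Real.exp (Real.log 2 * (μ/2)) * Real.exp (-(μ/2))
      ≤ Real.exp (-(5/4) * t) := by
    rw [← Real.exp_add]
    apply Real.exp_le_exp.mpr
    have hlog2 : Real.log 2 < 0.6931471808 := Real.log_two_lt_d9
    nlinarith [Real.log_nonneg (show (1:ℝ) ≤ 2 by norm_num)]
  calc prEvent p (fun S => ¬ (5 * t ≤ ((S ∩ C).card : ℝ)))
      ≤ Real.exp (Real.log 2 * (μ/2)) * (1 - p/2) ^ C.card := hsum
    _ ≤ Real.exp (Real.log 2 * (μ/2)) * Real.exp (-(μ/2)) :=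
        mul_le_mul_of_nonneg_left hpow (le_of_lt hexp)
    _ ≤ _ := hfinal

open Classical in
noncomputable def indR (A : Prop) (w : ℝ) : ℝ := if A then w else 0

lemma indR_of_pos {A : Prop} {w : ℝ} (h : A) : indR A w = w := if_pos h

lemma indR_nonneg {A : Prop} {w : ℝ} (hw : 0 ≤ w) : 0 ≤ indR A w := by
  unfold indR; split
  · exact hw
  · exact le_rfl

lemma prEvent_eq {V : Type*} [Fintype V] [DecidableEq V] (p : ℝ) (A : Finset V → Prop) :
    prEvent p A = ∑ S : Finset V, indR (A S) (bernoulliWeight p S) := rfl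

lemma prEvent_mono {V : Type*} [Fintype V] [DecidableEq V] {p : ℝ}
    (hp0 : 0 ≤ p) (hp1 : p ≤ 1) {A B : Finset V → Prop} (h : ∀ S, A S → B S) :
    prEvent p A ≤ prEvent p B := by
  rw [prEvent_eq, prEvent_eq]
  refine Finset.sum_le_sum fun S _ => ?_
  by_cases hA : A S
  · rw [indR_of_pos hA, indR_of_pos (h S hA)]
  · unfold indR; rw [if_neg hA]
    exact indR_nonneg (weight_nonneg hp0 hp1 S)

/-- for a partition of `V` into ground-truth clusters `C₁*,…,C_k*`,
with probability at least `1 − k·n^(−5/4)`, simultaneously every cluster of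
size at least `n/k` has at least `5·ln n` sampled nodes. -/
theorem stmt_2 {V : Type*} [Fintype V] [DecidableEq V]
    (n : ℕ) (hn : Fintype.card V = n) (hn3 : 3 ≤ n)
    (k : ℕ) (hk : 1 ≤ k)
    (Cstar : Fin k → Finset V)
    (hne : ∀ i, (Cstar i).Nonempty)
    (hdisj : ∀ i j, i ≠ j → Disjoint (Cstar i) (Cstar j))
    (hcover : ∀ v : V, ∃ i, v ∈ Cstar i)
    (m : ℕ) (hm₁ : 10 * k * Real.log n ≤ (m : ℝ)) (hm₂ : m ≤ n) :
    1 - k * (n : ℝ) ^ (-(5 / 4 : ℝ)) ≤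
      prEvent ((m : ℝ) / n)
        (fun S => ∀ i, (n : ℝ) / k ≤ ((Cstar i).card : ℝ) →
          5 * Real.log n ≤ ((S ∩ Cstar i).card : ℝ)) := by
  classical
  set p : ℝ := (m : ℝ) / n with hpdef
  set t : ℝ := Real.log n with htdef
  have hn0 : (0:ℝ) < n := by
    have : (0:ℕ) < n := by omega
    exact_mod_cast this
  have hk0 : (0:ℝ) < k := by exact_mod_cast hk
  have hp0 : 0 ≤ p := by positivity
  have hp1 : p ≤ 1 := by
    rw [hpdef, div_le_one hn0]; exact_mod_cast hm₂
  have ht0 : 0 ≤ t := Real.log_nonneg (by exact_mod_cast (by omega : 1 ≤ n))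
  have hw := fun S : Finset V => weight_nonneg (p := p) hp0 hp1 S
  set bad : Fin k → Finset V → Prop :=
    fun i S => (n:ℝ)/k ≤ ((Cstar i).card:ℝ) ∧ ¬ (5*t ≤ ((S ∩ Cstar i).card:ℝ)) with hbaddef
  set good : Finset V → Prop :=
    fun S => ∀ i, (n:ℝ)/k ≤ ((Cstar i).card:ℝ) → 5*t ≤ ((S ∩ Cstar i).card:ℝ) with hgooddef
  -- per-cluster bound
  have hbad : ∀ i : Fin k, prEvent p (bad i) ≤ (n:ℝ) ^ (-(5/4 : ℝ)) := by
    intro i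
    have hrpow : (n:ℝ) ^ (-(5/4:ℝ)) = Real.exp (-(5/4) * t) := by
      rw [Real.rpow_def_of_pos hn0]; congr 1; rw [htdef]; ring
    by_cases hsz : (n:ℝ)/k ≤ ((Cstar i).card:ℝ)
    · have hμ : 10 * t ≤ p * ((Cstar i).card:ℝ) := by
        have h1 : p * ((n:ℝ)/k) ≤ p * ((Cstar i).card:ℝ) :=
          mul_le_mul_of_nonneg_left hsz hp0
        have h2 : p * ((n:ℝ)/k) = (m:ℝ)/k := by
          rw [hpdef]; field_simp
        have h3 : 10 * t ≤ (m:ℝ)/k := by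
          rw [le_div_iff₀ hk0]
          calc 10*t*(k:ℝ) = 10*k*t := by ring
            _ ≤ m := hm₁
        linarith
      calc prEvent p (bad i)
          ≤ prEvent p (fun S => ¬ (5*t ≤ ((S ∩ Cstar i).card:ℝ))) :=
            prEvent_mono hp0 hp1 (fun S hS => hS.2)
        _ ≤ Real.exp (-(5/4) * t) := per_cluster hp0 hp1 _ ht0 hμ
        _ = (n:ℝ) ^ (-(5/4:ℝ)) := hrpow.symm
    · have hz : prEvent p (bad i) = 0 := by
        rw [prEvent_eq]
        refine Finset.sum_eq_zero fun S _ => ?_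
        unfold indR; exact if_neg (fun hc => hsz hc.1)
      rw [hz]; positivity
  -- pointwise union bound
  have hkey : ∀ S : Finset V, bernoulliWeight p S
      ≤ indR (good S) (bernoulliWeight p S)
        + ∑ i : Fin k, indR (bad i S) (bernoulliWeight p S) := by
    intro S
    by_cases hg : good S
    · rw [indR_of_pos hg]
      have : 0 ≤ ∑ i : Fin k, indR (bad i S) (bernoulliWeight p S) :=
        Finset.sum_nonneg fun i _ => indR_nonneg (hw S)
      linarith
    · have hgood0 : 0 ≤ indR (good S) (bernoulliWeight p S) := indR_nonneg (hw S)
      simp only [hgooddef] at hg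
      push_neg at hg
      obtain ⟨i0, h1, h2⟩ := hg
      have hb : bad i0 S := ⟨h1, not_le.mpr h2⟩
      have hs : indR (bad i0 S) (bernoulliWeight p S)
          ≤ ∑ i : Fin k, indR (bad i S) (bernoulliWeight p S) :=
        Finset.single_le_sum (f := fun i => indR (bad i S) (bernoulliWeight p S))
          (fun i _ => indR_nonneg (hw S)) (Finset.mem_univ i0)
      rw [indR_of_pos hb] at hs
      linarith
  -- conclude
  have hsumbad : ∑ i : Fin k, prEvent p (bad i) ≤ (k:ℝ) * (n:ℝ) ^ (-(5/4:ℝ)) := by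
    calc ∑ i : Fin k, prEvent p (bad i) ≤ ∑ _i : Fin k, (n:ℝ) ^ (-(5/4:ℝ)) :=
        Finset.sum_le_sum fun i _ => hbad i
      _ = (k:ℝ) * (n:ℝ) ^ (-(5/4:ℝ)) := by
        rw [Finset.sum_const, Finset.card_univ, Fintype.card_fin, nsmul_eq_mul]
  have hmain : 1 - ∑ i : Fin k, prEvent p (bad i) ≤ prEvent p good := by
    have h1 : (1:ℝ) = ∑ S : Finset V, bernoulliWeight p S := (weight_total p).symm
    have h2 : ∑ i : Fin k, prEvent p (bad i)
        = ∑ S : Finset V, ∑ i : Fin k, indR (bad i S) (bernoulliWeight p S) := by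
      simp only [prEvent_eq]
      exact Finset.sum_comm
    rw [prEvent_eq, h1, h2, ← Finset.sum_sub_distrib]
    refine Finset.sum_le_sum fun S _ => ?_
    have := hkey S
    linarith
  have hfin : prEvent p good ≤ prEvent p
      (fun S => ∀ i, (n : ℝ) / k ≤ ((Cstar i).card : ℝ) →
          5 * Real.log n ≤ ((S ∩ Cstar i).card : ℝ)) := le_of_eq rfl
  calc 1 - (k:ℝ) * (n:ℝ) ^ (-(5/4:ℝ))
      ≤ 1 - ∑ i : Fin k, prEvent p (bad i) := by linarith
    _ ≤ prEvent p good := hmain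
    _ ≤ _ := hfin
end

section
/- Let V be a finite set of n ≥ 3 nodes, let k ≥ 1 be an integer, let C* ⊆ V be a ground-truth cluster with |C*| ≥ n/k, and let A₁, …, A_t be a partition of C* into t nonempty feature classes with fractions α_j = |A_j|/|C*| and γ = min_j α_j > 0. Draw a random subset S ⊆ V by Bernoulli sampling with rate p = m/n, where m is an integer with (12·k/(γ·ε²))·ln n ≤ m ≤ n and 0 < ε ≤ 1. Then with probability at least 1 − 2(t+1)/n, one has C* ∩ S ≠ ∅ and, simultaneously for every j = 1, …, t, α_j·(1 − ε) ≤ |A_j ∩ S| / |C* ∩ S| ≤ α_j·(1 + 2ε); in particular, with this probability the group-fairness parameters [min_j α_j, max_j α_j] estimated from the sample are within a multiplicative factor (1 − ε, 1 + 2ε) of the true parameters. -/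
section aux
variable {V : Type*} [Fintype V] [DecidableEq V]
open Finset

lemma bw_nonneg {p : ℝ} (h0 : 0 ≤ p) (h1 : p ≤ 1) (S : Finset V) :
    0 ≤ bernoulliWeight p S := by
  have h2 : (0:ℝ) ≤ 1 - p := by linarith
  unfold bernoulliWeight; positivity

lemma sum_weight_mul (p : ℝ) (f : V → ℝ) :
    ∏ v : V, (f v + (1 - p)) =
      ∑ S : Finset V, (∏ v ∈ S, f v) * (1 - p) ^ (Fintype.card V - S.card) := by
  rw [Finset.prod_add, Finset.powerset_univ]
  refine Finset.sum_congr rfl fun S _ => ?_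
  rw [← Finset.compl_eq_univ_sdiff, Finset.prod_const, Finset.card_compl]

lemma mgf_eq (p : ℝ) (A : Finset V) (c : ℝ) :
    ∑ S : Finset V, bernoulliWeight p S * c ^ (A ∩ S).card
      = (p * c + (1 - p)) ^ A.card := by
  have key : ∀ S : Finset V, bernoulliWeight p S * c ^ (A ∩ S).card
      = (∏ v ∈ S, (p * if v ∈ A then c else 1)) * (1 - p) ^ (Fintype.card V - S.card) := by
    intro S
    rw [Finset.prod_mul_distrib, Finset.prod_const]
    have h1 : (∏ v ∈ S, if v ∈ A then c else 1) = c ^ (A ∩ S).card := by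
      rw [← Finset.prod_filter, Finset.filter_mem_eq_inter, Finset.prod_const,
        Finset.inter_comm]
    rw [h1]
    unfold bernoulliWeight
    ring
  simp_rw [key]
  rw [← sum_weight_mul]
  have h2 : ∀ v : V, (p * if v ∈ A then c else 1) + (1 - p)
      = if v ∈ A then p * c + (1 - p) else 1 := by
    intro v; split <;> ring
  simp_rw [h2]
  rw [← Finset.prod_filter, Finset.filter_mem_eq_inter, Finset.univ_inter, Finset.prod_const]

lemma sum_weight_one {p : ℝ} : ∑ S : Finset V, bernoulliWeight p S = 1 := by
  have := mgf_eq (V := V) p ∅ 1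
  simpa using this

/-- Chernoff upper tail (raw). -/
lemma chernoff_ub {p : ℝ} (h0 : 0 ≤ p) (h1 : p ≤ 1) (A : Finset V) (a l : ℝ) (hl : 0 ≤ l) :
    prEvent p (fun S => a ≤ ((A ∩ S).card : ℝ)) ≤
      Real.exp (-(l * a)) * (p * Real.exp l + (1 - p)) ^ A.card := by
  classical
  rw [prEvent, ← mgf_eq p A (Real.exp l), Finset.mul_sum]
  refine Finset.sum_le_sum fun S _ => ?_
  have hw := bw_nonneg h0 h1 S
  have hexp : (Real.exp l) ^ (A ∩ S).card = Real.exp (l * (A ∩ S).card) := by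
    rw [← Real.exp_nat_mul]; ring_nf
  split
  · rename_i hA
    rw [hexp]
    have h2 : (1:ℝ) ≤ Real.exp (-(l*a)) * Real.exp (l * (A ∩ S).card) := by
      rw [← Real.exp_add]
      have : (0:ℝ) ≤ -(l*a) + l * (A ∩ S).card := by nlinarith
      calc (1:ℝ) = Real.exp 0 := by simp
        _ ≤ _ := Real.exp_le_exp.2 this
    calc bernoulliWeight p S = 1 * bernoulliWeight p S := by ring
      _ ≤ (Real.exp (-(l*a)) * Real.exp (l * (A ∩ S).card)) * bernoulliWeight p S :=
          mul_le_mul_of_nonneg_right h2 hw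
      _ = Real.exp (-(l*a)) * (bernoulliWeight p S * Real.exp (l * (A ∩ S).card)) := by ring
  · positivity

/-- Chernoff lower tail (raw). -/
lemma chernoff_lb {p : ℝ} (h0 : 0 ≤ p) (h1 : p ≤ 1) (A : Finset V) (a l : ℝ) (hl : 0 ≤ l) :
    prEvent p (fun S => ((A ∩ S).card : ℝ) ≤ a) ≤
      Real.exp (l * a) * (p * Real.exp (-l) + (1 - p)) ^ A.card := by
  classical
  rw [prEvent, ← mgf_eq p A (Real.exp (-l)), Finset.mul_sum]
  refine Finset.sum_le_sum fun S _ => ?_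
  have hw := bw_nonneg h0 h1 S
  have hexp : (Real.exp (-l)) ^ (A ∩ S).card = Real.exp (-l * (A ∩ S).card) := by
    rw [← Real.exp_nat_mul]; ring_nf
  split
  · rename_i hA
    rw [hexp]
    have h2 : (1:ℝ) ≤ Real.exp (l*a) * Real.exp (-l * (A ∩ S).card) := by
      rw [← Real.exp_add]
      have : (0:ℝ) ≤ l*a + -l * (A ∩ S).card := by nlinarith
      calc (1:ℝ) = Real.exp 0 := by simp
        _ ≤ _ := Real.exp_le_exp.2 this
    calc bernoulliWeight p S = 1 * bernoulliWeight p S := by ring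
      _ ≤ (Real.exp (l*a) * Real.exp (-l * (A ∩ S).card)) * bernoulliWeight p S :=
          mul_le_mul_of_nonneg_right h2 hw
      _ = Real.exp (l*a) * (bernoulliWeight p S * Real.exp (-l * (A ∩ S).card)) := by ring
  · positivity

lemma exp_cubic {x : ℝ} (hx : |x| ≤ 1) : Real.exp x ≤ 1 + x + x^2/2 + (2/9)*|x|^3 := by
  have h := Real.exp_bound hx (n := 3) (by norm_num)
  have hs : ∑ m ∈ Finset.range 3, x^m / (m.factorial : ℝ) = 1 + x + x^2/2 := by
    norm_num [Finset.sum_range_succ, Nat.factorial]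
    try ring
  rw [hs] at h
  have h2 := (abs_le.1 h).2
  have h3 : ((3:ℕ).succ : ℝ) / ((3:ℕ).factorial * (3:ℕ)) = 2/9 := by
    norm_num [Nat.factorial]
  rw [h3] at h2
  linarith

/-- Clean upper-tail bound. -/
lemma tail_ub {p d : ℝ} (h0 : 0 ≤ p) (h1 : p ≤ 1) (hd0 : 0 < d) (hd1 : d ≤ 1/2)
    (A : Finset V) :
    prEvent p (fun S => (1 + d) * (p * A.card) ≤ ((A ∩ S).card : ℝ)) ≤
      Real.exp (-((7:ℝ)/18 * d^2 * (p * A.card))) := by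
  have hμ : (0:ℝ) ≤ p * A.card := by positivity
  have h := chernoff_ub h0 h1 A ((1 + d) * (p * A.card)) d hd0.le
  refine h.trans ?_
  have hexp1 : (1:ℝ) ≤ Real.exp d := by
    rw [show (1:ℝ) = Real.exp 0 by simp]; exact Real.exp_le_exp.2 hd0.le
  have hbase0 : (0:ℝ) ≤ p * Real.exp d + (1 - p) := by nlinarith
  have hbase : p * Real.exp d + (1 - p) ≤ Real.exp (p * (Real.exp d - 1)) := by
    have := Real.add_one_le_exp (p * (Real.exp d - 1))
    linarith
  have hpow : (p * Real.exp d + (1 - p)) ^ A.card ≤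
      Real.exp ((A.card : ℝ) * (p * (Real.exp d - 1))) := by
    rw [Real.exp_nat_mul]
    exact pow_le_pow_left₀ hbase0 hbase _
  calc Real.exp (-(d * ((1 + d) * (p * A.card)))) * (p * Real.exp d + (1 - p)) ^ A.card
      ≤ Real.exp (-(d * ((1 + d) * (p * A.card)))) *
          Real.exp ((A.card : ℝ) * (p * (Real.exp d - 1))) :=
        mul_le_mul_of_nonneg_left hpow (Real.exp_nonneg _)
    _ = Real.exp ((p * A.card) * (Real.exp d - 1 - d * (1 + d))) := by
        rw [← Real.exp_add]; ring_nf
    _ ≤ Real.exp (-((7:ℝ)/18 * d^2 * (p * A.card))) := by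
        apply Real.exp_le_exp.2
        have hx : |d| ≤ 1 := by rw [abs_of_pos hd0]; linarith
        have hcub := exp_cubic hx
        rw [abs_of_pos hd0] at hcub
        have hkey : Real.exp d - 1 - d * (1 + d) ≤ -((7:ℝ)/18) * d^2 := by
          nlinarith [pow_pos hd0 3]
        nlinarith [mul_le_mul_of_nonneg_left hkey hμ]

/-- Clean lower-tail bound. -/
lemma tail_lb {p d : ℝ} (h0 : 0 ≤ p) (h1 : p ≤ 1) (hd0 : 0 < d) (hd1 : d ≤ 1/2)
    (A : Finset V) :
    prEvent p (fun S => ((A ∩ S).card : ℝ) ≤ (1 - d) * (p * A.card)) ≤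
      Real.exp (-((7:ℝ)/18 * d^2 * (p * A.card))) := by
  have hμ : (0:ℝ) ≤ p * A.card := by positivity
  have h := chernoff_lb h0 h1 A ((1 - d) * (p * A.card)) d hd0.le
  refine h.trans ?_
  have hexp1 : Real.exp (-d) ≤ 1 := by
    rw [show (1:ℝ) = Real.exp 0 by simp]; exact Real.exp_le_exp.2 (by linarith)
  have hexppos := Real.exp_pos (-d)
  have hbase0 : (0:ℝ) ≤ p * Real.exp (-d) + (1 - p) := by nlinarith
  have hbase : p * Real.exp (-d) + (1 - p) ≤ Real.exp (p * (Real.exp (-d) - 1)) := by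
    have := Real.add_one_le_exp (p * (Real.exp (-d) - 1))
    linarith
  have hpow : (p * Real.exp (-d) + (1 - p)) ^ A.card ≤
      Real.exp ((A.card : ℝ) * (p * (Real.exp (-d) - 1))) := by
    rw [Real.exp_nat_mul]
    exact pow_le_pow_left₀ hbase0 hbase _
  calc Real.exp (d * ((1 - d) * (p * A.card))) * (p * Real.exp (-d) + (1 - p)) ^ A.card
      ≤ Real.exp (d * ((1 - d) * (p * A.card))) *
          Real.exp ((A.card : ℝ) * (p * (Real.exp (-d) - 1))) :=
        mul_le_mul_of_nonneg_left hpow (Real.exp_nonneg _)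
    _ = Real.exp ((p * A.card) * (Real.exp (-d) - 1 + d * (1 - d))) := by
        rw [← Real.exp_add]; ring_nf
    _ ≤ Real.exp (-((7:ℝ)/18 * d^2 * (p * A.card))) := by
        apply Real.exp_le_exp.2
        have hx : |(-d)| ≤ 1 := by rw [abs_neg, abs_of_pos hd0]; linarith
        have hcub := exp_cubic hx
        rw [abs_neg, abs_of_pos hd0] at hcub
        have hkey : Real.exp (-d) - 1 + d * (1 - d) ≤ -((7:ℝ)/18) * d^2 := by
          nlinarith [pow_pos hd0 3]
        nlinarith [mul_le_mul_of_nonneg_left hkey hμ]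

lemma prEvent_mono_s7 {p : ℝ} (h0 : 0 ≤ p) (h1 : p ≤ 1) {E F : Finset V → Prop}
    (h : ∀ S, E S → F S) : prEvent p E ≤ prEvent p F := by
  classical
  rw [prEvent, prEvent]
  refine Finset.sum_le_sum fun S _ => ?_
  by_cases hE : E S
  · rw [if_pos hE, if_pos (h S hE)]
  · rw [if_neg hE]
    split
    · exact bw_nonneg h0 h1 S
    · exact le_refl 0

lemma prEvent_add_compl {p : ℝ} (E : Finset V → Prop) :
    prEvent p E + prEvent p (fun S => ¬ E S) = 1 := by
  classical
  rw [prEvent, prEvent, ← Finset.sum_add_distrib, ← sum_weight_one (V := V) (p := p)]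
  refine Finset.sum_congr rfl fun S _ => ?_
  by_cases h : E S <;> simp [h]

lemma prEvent_union {p : ℝ} (h0 : 0 ≤ p) (h1 : p ≤ 1) {ι : Type*} [Fintype ι]
    (P : ι → Finset V → Prop) :
    prEvent p (fun S => ∃ i, P i S) ≤ ∑ i : ι, prEvent p (P i) := by
  classical
  have hstep : ∀ S : Finset V,
      (@ite ℝ (∃ i, P i S) (Classical.propDecidable ((fun S => ∃ i, P i S) S))
        (bernoulliWeight p S) 0) ≤
      ∑ i : ι, @ite ℝ (P i S) (Classical.propDecidable (P i S))
        (bernoulliWeight p S) 0 := by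
    intro S
    by_cases h : ∃ i, P i S
    · rw [if_pos h]
      obtain ⟨i0, hi0⟩ := h
      have h1' : (if P i0 S then bernoulliWeight p S else 0) = bernoulliWeight p S :=
        if_pos hi0
      calc bernoulliWeight p S = (if P i0 S then bernoulliWeight p S else 0) := h1'.symm
        _ ≤ ∑ i : ι, if P i S then bernoulliWeight p S else 0 := by
            refine Finset.single_le_sum (N := ℝ)
              (f := fun i : ι => if P i S then bernoulliWeight p S else 0)
              (fun i _ => ?_) (Finset.mem_univ i0)
            show 0 ≤ (if P i S then bernoulliWeight p S else 0)
            split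
            · exact bw_nonneg h0 h1 S
            · exact le_refl 0
    · rw [if_neg h]
      refine Finset.sum_nonneg fun i _ => ?_
      split
      · exact bw_nonneg h0 h1 S
      · exact le_refl 0
  unfold prEvent
  simp only []
  refine le_trans (Finset.sum_le_sum fun S _ => hstep S) (le_of_eq ?_)
  exact Finset.sum_comm

end aux

set_option maxHeartbeats 1000000 in
/-- Theorem 1 instance, ω_GF: for a cluster `C*` with
`|C*| ≥ n/k` partitioned into feature classes `A₁,…,A_t` with fractions `α_j`
and `γ = min_j α_j > 0`, sampling at rate `p = m/n` with
`(12k/(γε²))·ln n ≤ m ≤ n` yields, with probability at least `1 − 2(t+1)/n`,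
simultaneous `(1−ε, 1+2ε)`-accurate estimates of all fractions; in particular
the estimated group-fairness parameters `[min_j α_j, max_j α_j]` are within a
multiplicative factor `(1−ε, 1+2ε)` of the true parameters. -/
theorem stmt_7 {V : Type*} [Fintype V] [DecidableEq V]
    (n : ℕ) (hn : Fintype.card V = n) (hn3 : 3 ≤ n)
    (k : ℕ) (hk : 1 ≤ k)
    (Cstar : Finset V) (hCsize : (n : ℝ) / k ≤ (Cstar.card : ℝ))
    (t : ℕ) (htne : (Finset.univ : Finset (Fin t)).Nonempty)
    (A : Fin t → Finset V)
    (hAne : ∀ j, (A j).Nonempty)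
    (hAsub : ∀ j, A j ⊆ Cstar)
    (hAdisj : ∀ j j', j ≠ j' → Disjoint (A j) (A j'))
    (hAcover : ∀ v ∈ Cstar, ∃ j, v ∈ A j)
    (α : Fin t → ℝ) (hα : ∀ j, α j = ((A j).card : ℝ) / (Cstar.card : ℝ))
    (γ : ℝ) (hγ : γ = Finset.univ.inf' htne α) (hγpos : 0 < γ)
    (ε : ℝ) (hε0 : 0 < ε) (hε1 : ε ≤ 1)
    (m : ℕ) (hm₁ : (12 * k / (γ * ε ^ 2)) * Real.log n ≤ (m : ℝ)) (hm₂ : m ≤ n) :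
    1 - 2 * ((t : ℝ) + 1) / (n : ℝ) ≤
      prEvent ((m : ℝ) / n) (fun S =>
        (Cstar ∩ S).Nonempty ∧
        (∀ j, α j * (1 - ε) ≤ ((A j ∩ S).card : ℝ) / (((Cstar ∩ S).card : ℝ)) ∧
          ((A j ∩ S).card : ℝ) / (((Cstar ∩ S).card : ℝ)) ≤ α j * (1 + 2 * ε)) ∧
        (γ * (1 - ε) ≤
            Finset.univ.inf' htne
              (fun j => ((A j ∩ S).card : ℝ) / (((Cstar ∩ S).card : ℝ))) ∧
          Finset.univ.inf' htne
              (fun j => ((A j ∩ S).card : ℝ) / (((Cstar ∩ S).card : ℝ)))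
            ≤ γ * (1 + 2 * ε)) ∧
        ((Finset.univ.sup' htne α) * (1 - ε) ≤
            Finset.univ.sup' htne
              (fun j => ((A j ∩ S).card : ℝ) / (((Cstar ∩ S).card : ℝ))) ∧
          Finset.univ.sup' htne
              (fun j => ((A j ∩ S).card : ℝ) / (((Cstar ∩ S).card : ℝ)))
            ≤ (Finset.univ.sup' htne α) * (1 + 2 * ε))) := by
  classical
  set p : ℝ := (m : ℝ) / n with hpdef
  set d : ℝ := ε / 2 with hdd
  have hn0 : (0:ℝ) < n := by
    have : (3:ℝ) ≤ n := by exact_mod_cast hn3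
    linarith
  have hn1 : (1:ℝ) < n := by
    have : (3:ℝ) ≤ n := by exact_mod_cast hn3
    linarith
  have hlog : 0 < Real.log n := Real.log_pos hn1
  have hk0 : (0:ℝ) < k := by exact_mod_cast hk
  have hN0 : (0:ℝ) < Cstar.card := lt_of_lt_of_le (by positivity) hCsize
  have hm0 : (0:ℝ) < m := lt_of_lt_of_le (by positivity) hm₁
  have hppos : 0 < p := by rw [hpdef]; positivity
  have hp0 : 0 ≤ p := hppos.le
  have hp1 : p ≤ 1 := by
    rw [hpdef]
    rw [div_le_one hn0]
    exact_mod_cast hm₂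
  have hd0 : 0 < d := by rw [hdd]; positivity
  have hd1 : d ≤ 1/2 := by rw [hdd]; linarith
  have hαle : ∀ j, γ ≤ α j := fun j => hγ ▸ Finset.inf'_le α (Finset.mem_univ j)
  have hαpos : ∀ j, 0 < α j := fun j => lt_of_lt_of_le hγpos (hαle j)
  have hγ1 : γ ≤ 1 := by
    obtain ⟨j, _⟩ := htne
    refine (hαle j).trans ?_
    rw [hα]
    rw [div_le_one hN0]
    exact_mod_cast Finset.card_le_card (hAsub j)
  have hAcard : ∀ j, ((A j).card : ℝ) = α j * Cstar.card := by
    intro j; rw [hα]; field_simp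
  have hAγ : ∀ j, γ * Cstar.card ≤ ((A j).card : ℝ) := by
    intro j
    rw [hAcard j]
    exact mul_le_mul_of_nonneg_right (hαle j) hN0.le
  have hCγ : γ * Cstar.card ≤ (Cstar.card : ℝ) := by nlinarith
  -- key exponent bound
  have hμbound : ∀ B : Finset V, γ * (Cstar.card : ℝ) ≤ (B.card : ℝ) →
      Real.exp (-((7:ℝ)/18 * d^2 * (p * B.card))) ≤ 1 / n := by
    intro B hB
    have hγ' : γ ≠ 0 := ne_of_gt hγpos
    have hε' : ε ≠ 0 := ne_of_gt hε0
    have hk' : (k:ℝ) ≠ 0 := ne_of_gt hk0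
    have hnn : (n:ℝ) ≠ 0 := ne_of_gt hn0
    have h1 : 12 * Real.log n ≤ ε^2 * (γ * m / k) := by
      have h2 := mul_le_mul_of_nonneg_left hm₁
        (show (0:ℝ) ≤ γ * ε^2 / k by positivity)
      calc 12 * Real.log n
          = γ * ε^2 / k * ((12 * k / (γ * ε^2)) * Real.log n) := by field_simp
        _ ≤ γ * ε^2 / k * m := h2
        _ = ε^2 * (γ * m / k) := by ring
    have h3 : γ * m / k ≤ p * B.card := by
      have h4 : p * (γ * Cstar.card) ≤ p * B.card := mul_le_mul_of_nonneg_left hB hp0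
      have h6 : p * γ * ((n:ℝ)/k) ≤ p * γ * Cstar.card :=
        mul_le_mul_of_nonneg_left hCsize (by positivity)
      have h5 : γ * m / k = p * γ * ((n:ℝ)/k) := by
        rw [hpdef]; field_simp
      nlinarith
    have h8 : 12 * Real.log n ≤ ε^2 * (p * B.card) := by
      have := mul_le_mul_of_nonneg_left h3 (show (0:ℝ) ≤ ε^2 by positivity)
      linarith
    have h7 : Real.log n ≤ (7:ℝ)/18 * d^2 * (p * B.card) := by
      rw [hdd]
      nlinarith [hlog, h8]
    calc Real.exp (-((7:ℝ)/18 * d^2 * (p * B.card)))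
        ≤ Real.exp (-(Real.log n)) := Real.exp_le_exp.2 (by linarith)
      _ = 1 / n := by rw [Real.exp_neg, Real.exp_log hn0, one_div]
  -- the family of sets and bad events
  set Bf : Option (Fin t) → Finset V := fun o => o.elim Cstar A with hBf
  have hBγ : ∀ o, γ * (Cstar.card : ℝ) ≤ ((Bf o).card : ℝ) := by
    intro o
    cases o with
    | none => exact hCγ
    | some j => exact hAγ j
  set Good : Finset V → Prop := fun S => ∀ o : Option (Fin t),
      (1 - d) * (p * ((Bf o).card : ℝ)) ≤ ((Bf o ∩ S).card : ℝ) ∧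
      ((Bf o ∩ S).card : ℝ) ≤ (1 + d) * (p * ((Bf o).card : ℝ)) with hGoodDef
  set P : Option (Fin t) × Bool → Finset V → Prop := fun ib S =>
      match ib.2 with
      | true => (1 + d) * (p * ((Bf ib.1).card : ℝ)) ≤ ((Bf ib.1 ∩ S).card : ℝ)
      | false => ((Bf ib.1 ∩ S).card : ℝ) ≤ (1 - d) * (p * ((Bf ib.1).card : ℝ))
    with hPdef
  have hbad : ∀ S, ¬ Good S → ∃ ib, P ib S := by
    intro S hS
    simp only [hGoodDef] at hS
    push_neg at hS
    obtain ⟨o, ho⟩ := hS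
    by_cases h1 : (1 - d) * (p * ((Bf o).card : ℝ)) ≤ ((Bf o ∩ S).card : ℝ)
    · refine ⟨(o, true), ?_⟩
      have h2 := ho h1
      exact h2.le
    · refine ⟨(o, false), ?_⟩
      push_neg at h1
      exact h1.le
  have hPle : ∀ ib, prEvent p (P ib) ≤ 1 / (n:ℝ) := by
    rintro ⟨o, b⟩
    cases b
    · exact le_trans (tail_lb hp0 hp1 hd0 hd1 (Bf o)) (hμbound _ (hBγ o))
    · exact le_trans (tail_ub hp0 hp1 hd0 hd1 (Bf o)) (hμbound _ (hBγ o))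
  have hsum : ∑ ib : Option (Fin t) × Bool, prEvent p (P ib) ≤ 2 * ((t:ℝ) + 1) / n := by
    calc ∑ ib : Option (Fin t) × Bool, prEvent p (P ib)
        ≤ ∑ _ib : Option (Fin t) × Bool, 1 / (n:ℝ) :=
          Finset.sum_le_sum fun ib _ => hPle ib
      _ = (Fintype.card (Option (Fin t) × Bool) : ℝ) * (1 / (n:ℝ)) := by
          rw [Finset.sum_const, Finset.card_univ, nsmul_eq_mul]
      _ = 2 * ((t:ℝ) + 1) / n := by
          simp only [Fintype.card_prod, Fintype.card_option, Fintype.card_fin,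
            Fintype.card_bool]
          push_cast
          ring
  have hnot : prEvent p (fun S => ¬ Good S) ≤ 2 * ((t:ℝ) + 1) / n :=
    le_trans (le_trans (prEvent_mono_s7 hp0 hp1 hbad) (prEvent_union hp0 hp1 P)) hsum
  have hcompl := prEvent_add_compl (V := V) (p := p) Good
  have hGoodLB : 1 - 2 * ((t:ℝ) + 1) / n ≤ prEvent p Good := by linarith
  refine le_trans hGoodLB (prEvent_mono_s7 hp0 hp1 ?_)
  -- Good implies the target event
  intro S hG
  have hGC := hG none
  have hY1 : (1 - d) * (p * (Cstar.card : ℝ)) ≤ ((Cstar ∩ S).card : ℝ) := hGC.1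
  have hY2 : ((Cstar ∩ S).card : ℝ) ≤ (1 + d) * (p * (Cstar.card : ℝ)) := hGC.2
  have hμC : 0 < p * (Cstar.card : ℝ) := mul_pos hppos hN0
  have hY0 : (0:ℝ) < ((Cstar ∩ S).card : ℝ) := by nlinarith
  have hne : (Cstar ∩ S).Nonempty := by
    rw [← Finset.card_pos]
    exact_mod_cast hY0
  have hratio : ∀ j, α j * (1 - ε) ≤ ((A j ∩ S).card : ℝ) / ((Cstar ∩ S).card : ℝ) ∧
      ((A j ∩ S).card : ℝ) / ((Cstar ∩ S).card : ℝ) ≤ α j * (1 + 2 * ε) := by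
    intro j
    have hGA := hG (some j)
    have hX1 : (1 - d) * (p * ((A j).card : ℝ)) ≤ ((A j ∩ S).card : ℝ) := hGA.1
    have hX2 : ((A j ∩ S).card : ℝ) ≤ (1 + d) * (p * ((A j).card : ℝ)) := hGA.2
    have hd1' : (0:ℝ) < 1 - d := by rw [hdd] at *; linarith
    have hd2' : (0:ℝ) < 1 + d := by linarith
    have hNne : (Cstar.card : ℝ) ≠ 0 := ne_of_gt hN0
    have hpne : p ≠ 0 := ne_of_gt hppos
    constructor
    · have hstep : ((1 - d) * (p * ((A j).card : ℝ))) / ((1 + d) * (p * (Cstar.card : ℝ)))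
          ≤ ((A j ∩ S).card : ℝ) / ((Cstar ∩ S).card : ℝ) :=
        div_le_div₀ (Nat.cast_nonneg _) hX1 hY0 hY2
      refine le_trans ?_ hstep
      rw [hAcard j]
      rw [show ((1 - d) * (p * (α j * (Cstar.card : ℝ)))) / ((1 + d) * (p * (Cstar.card : ℝ)))
          = α j * ((1 - d) / (1 + d)) by field_simp]
      refine mul_le_mul_of_nonneg_left ?_ (hαpos j).le
      rw [le_div_iff₀ hd2', hdd]
      nlinarith
    · have hstep : ((A j ∩ S).card : ℝ) / ((Cstar ∩ S).card : ℝ)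
          ≤ ((1 + d) * (p * ((A j).card : ℝ))) / ((1 - d) * (p * (Cstar.card : ℝ))) :=
        div_le_div₀ (mul_nonneg hd2'.le (mul_nonneg hp0 (Nat.cast_nonneg _))) hX2 (mul_pos hd1' (mul_pos hppos hN0)) hY1
      refine le_trans hstep ?_
      rw [hAcard j]
      rw [show ((1 + d) * (p * (α j * (Cstar.card : ℝ)))) / ((1 - d) * (p * (Cstar.card : ℝ)))
          = α j * ((1 + d) / (1 - d)) by field_simp]
      refine mul_le_mul_of_nonneg_left ?_ (hαpos j).le
      rw [div_le_iff₀ hd1', hdd]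
      nlinarith
  refine ⟨hne, hratio, ⟨?_, ?_⟩, ⟨?_, ?_⟩⟩
  · refine Finset.le_inf' htne _ fun j _ => ?_
    refine le_trans ?_ (hratio j).1
    exact mul_le_mul_of_nonneg_right (hαle j) (by linarith)
  · obtain ⟨j0, _, hj0⟩ := Finset.exists_mem_eq_inf' htne α
    refine le_trans (Finset.inf'_le _ (Finset.mem_univ j0)) ?_
    rw [hγ, hj0]
    exact (hratio j0).2
  · obtain ⟨j1, _, hj1⟩ := Finset.exists_mem_eq_sup' htne α
    rw [hj1]
    exact le_trans (hratio j1).1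
      (Finset.le_sup' (fun j => ((A j ∩ S).card : ℝ) / ((Cstar ∩ S).card : ℝ))
        (Finset.mem_univ j1))
  · refine Finset.sup'_le htne _ fun j _ => ?_
    refine le_trans (hratio j).2 ?_
    refine mul_le_mul_of_nonneg_right ?_ (by linarith)
    exact Finset.le_sup' α (Finset.mem_univ j)
end

section
/- Let (V,d) be a finite metric space, let 𝒫 = {C₁*, …, C_k*} be a partition of V into k nonempty blocks, let W ⊆ V, and suppose 𝒫 satisfies the margin property on W. Let 𝒟 be a partition of W into nonempty blocks that refines the partition {C_i* ∩ W : C_i* ∩ W ≠ ∅} of W, and suppose the number of blocks of 𝒟 is strictly greater than the number of indices i with C_i* ∩ W ≠ ∅. Then: (a) there exist two distinct blocks of 𝒟 contained in a common block of 𝒫; and (b) every pair (D₁, D₂) of distinct blocks of 𝒟 that minimizes the complete-linkage distance d(D₁, D₂) over all pairs of distinct blocks of 𝒟 satisfies D₁ ∪ D₂ ⊆ C_i* for some i. -/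
/-- `P` is a partition of the finite set `W` into nonempty blocks. -/
def IsPartitionOn {V : Type*} [DecidableEq V] (W : Finset V)
    (P : Finset (Finset V)) : Prop :=
  (∀ B ∈ P, B.Nonempty) ∧ (∀ B ∈ P, B ⊆ W) ∧
  (∀ B₁ ∈ P, ∀ B₂ ∈ P, B₁ ≠ B₂ → Disjoint B₁ B₂) ∧
  (∀ v ∈ W, ∃ B ∈ P, v ∈ B)

/-- The partition `P` satisfies the margin property on `W`: any two distinct
points of `W` in the same block of `P` are strictly closer than any two points
of `W` lying in two distinct blocks of `P`. -/
def MarginOn {V : Type*} [MetricSpace V] (P : Finset (Finset V))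
    (W : Finset V) : Prop :=
  ∀ u ∈ W, ∀ v ∈ W, ∀ x ∈ W, ∀ y ∈ W,
    u ≠ v → (∃ B ∈ P, u ∈ B ∧ v ∈ B) →
    (∃ B₁ ∈ P, ∃ B₂ ∈ P, B₁ ≠ B₂ ∧ x ∈ B₁ ∧ y ∈ B₂) →
    dist u v < dist x y

/-- Complete-linkage distance between two finite sets of points:
`d(D₁,D₂) = max_{u ∈ D₁, v ∈ D₂} d(u,v)`. -/
noncomputable def clDist {V : Type*} [MetricSpace V] (D₁ D₂ : Finset V) : ℝ :=
  sSup {r : ℝ | ∃ u ∈ D₁, ∃ v ∈ D₂, r = dist u v}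

/-- `D` refines `Q`: every block of `D` is contained in some block of `Q`. -/
def Refines {V : Type*} (D Q : Finset (Finset V)) : Prop :=
  ∀ B ∈ D, ∃ B' ∈ Q, B ⊆ B'

/-- The restriction of the partition `P` to `W`:
the nonempty sets among `{C ∩ W : C ∈ P}`. -/
def restrictPartition {V : Type*} [DecidableEq V] (P : Finset (Finset V))
    (W : Finset V) : Finset (Finset V) :=
  (P.image (fun C => C ∩ W)).filter Finset.Nonempty


section Aux
variable {V : Type*} [MetricSpace V]

lemma clDist_set_eq (D₁ D₂ : Finset V) :
    {r : ℝ | ∃ u ∈ D₁, ∃ v ∈ D₂, r = dist u v} =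
      (fun p : V × V => dist p.1 p.2) '' ((↑D₁ : Set V) ×ˢ (↑D₂ : Set V)) := by
  ext r
  constructor
  · rintro ⟨u, hu, v, hv, rfl⟩
    exact ⟨(u, v), ⟨hu, hv⟩, rfl⟩
  · rintro ⟨⟨u, v⟩, ⟨hu, hv⟩, rfl⟩
    exact ⟨u, hu, v, hv, rfl⟩

lemma clDist_finite (D₁ D₂ : Finset V) :
    {r : ℝ | ∃ u ∈ D₁, ∃ v ∈ D₂, r = dist u v}.Finite := by
  rw [clDist_set_eq]
  exact ((D₁.finite_toSet.prod D₂.finite_toSet).image _)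

lemma le_clDist {D₁ D₂ : Finset V} {u v : V} (hu : u ∈ D₁) (hv : v ∈ D₂) :
    dist u v ≤ clDist D₁ D₂ :=
  le_csSup (clDist_finite D₁ D₂).bddAbove ⟨u, hu, v, hv, rfl⟩

lemma clDist_mem {D₁ D₂ : Finset V} (h₁ : D₁.Nonempty) (h₂ : D₂.Nonempty) :
    ∃ u ∈ D₁, ∃ v ∈ D₂, clDist D₁ D₂ = dist u v := by
  obtain ⟨u, hu⟩ := h₁
  obtain ⟨v, hv⟩ := h₂
  have hne : {r : ℝ | ∃ u ∈ D₁, ∃ v ∈ D₂, r = dist u v}.Nonempty :=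
    ⟨dist u v, u, hu, v, hv, rfl⟩
  exact hne.csSup_mem (clDist_finite D₁ D₂)

end Aux

/-- MergeClosest correctness: under the margin property, if the
refining partition `D` of `W` has strictly more blocks than the restriction of
the ground truth `P` to `W`, then (a) two distinct blocks of `D` lie in a common
ground-truth block, and (b) every closest pair of distinct blocks of `D` (in
complete-linkage distance) lies within a single ground-truth block. -/
theorem stmt_8 {V : Type*} [MetricSpace V] [Fintype V] [DecidableEq V]
    (k : ℕ) (P : Finset (Finset V))
    (hP : IsPartitionOn Finset.univ P) (hPk : P.card = k)
    (W : Finset V) (hmargin : MarginOn P W)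
    (D : Finset (Finset V)) (hD : IsPartitionOn W D)
    (href : Refines D (restrictPartition P W))
    (hcard : (restrictPartition P W).card < D.card) :
    (∃ D₁ ∈ D, ∃ D₂ ∈ D, D₁ ≠ D₂ ∧ ∃ C ∈ P, D₁ ⊆ C ∧ D₂ ⊆ C) ∧
    (∀ D₁ ∈ D, ∀ D₂ ∈ D, D₁ ≠ D₂ →
      (∀ E₁ ∈ D, ∀ E₂ ∈ D, E₁ ≠ E₂ → clDist D₁ D₂ ≤ clDist E₁ E₂) →
      ∃ C ∈ P, D₁ ∪ D₂ ⊆ C) := by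

  classical
  obtain ⟨hDne, hDsub, hDdisj, hDcov⟩ := hD
  -- choice function mapping each block of D into restrictPartition
  set R := restrictPartition P W with hR
  have hchoose : ∀ B ∈ D, ∃ B' ∈ R, B ⊆ B' := href
  let f : Finset V → Finset V := fun B =>
    if h : ∃ B' ∈ R, B ⊆ B' then h.choose else ∅
  have hf : ∀ B ∈ D, f B ∈ R ∧ B ⊆ f B := by
    intro B hB
    have h := hchoose B hB
    simp only [f, dif_pos h]
    exact ⟨h.choose_spec.1, h.choose_spec.2⟩
  have hmaps : ∀ B ∈ D, f B ∈ R := fun B hB => (hf B hB).1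
  obtain ⟨A, hA, B, hB, hAB, hfeq⟩ :=
    Finset.exists_ne_map_eq_of_card_lt_of_maps_to hcard hmaps
  -- f A ∈ R means it is C ∩ W for some C ∈ P
  have hfAR : f A ∈ R := hmaps A hA
  rw [hR, restrictPartition, Finset.mem_filter, Finset.mem_image] at hfAR
  obtain ⟨⟨C, hC, hCW⟩, _⟩ := hfAR
  have hAC : A ⊆ C := by
    intro x hx
    have := (hf A hA).2 hx
    rw [← hCW] at this
    exact (Finset.mem_inter.mp this).1
  have hBC : B ⊆ C := by
    intro x hx
    have := (hf B hB).2 hx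
    rw [← hfeq, ← hCW] at this
    exact (Finset.mem_inter.mp this).1
  refine ⟨⟨A, hA, B, hB, hAB, C, hC, hAC, hBC⟩, ?_⟩
  -- part (b)
  intro D₁ hD₁ D₂ hD₂ hne hmin
  obtain ⟨B₁', hB₁', hsub₁⟩ := href D₁ hD₁
  obtain ⟨B₂', hB₂', hsub₂⟩ := href D₂ hD₂
  rw [hR, restrictPartition, Finset.mem_filter, Finset.mem_image] at hB₁' hB₂'
  obtain ⟨⟨C₁, hC₁, hC₁W⟩, _⟩ := hB₁'
  obtain ⟨⟨C₂, hC₂, hC₂W⟩, _⟩ := hB₂'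
  have hsub₁' : D₁ ⊆ C₁ ∩ W := hC₁W ▸ hsub₁
  have hsub₂' : D₂ ⊆ C₂ ∩ W := hC₂W ▸ hsub₂
  by_cases hCeq : C₁ = C₂
  · refine ⟨C₁, hC₁, ?_⟩
    intro x hx
    rcases Finset.mem_union.mp hx with h | h
    · exact (Finset.mem_inter.mp (hsub₁' h)).1
    · exact hCeq ▸ (Finset.mem_inter.mp (hsub₂' h)).1
  -- otherwise derive a contradiction with minimality
  exfalso
  obtain ⟨x, hx⟩ := hDne D₁ hD₁
  obtain ⟨y, hy⟩ := hDne D₂ hD₂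
  have hxW : x ∈ W := hDsub D₁ hD₁ hx
  have hyW : y ∈ W := hDsub D₂ hD₂ hy
  have hxC₁ : x ∈ C₁ := (Finset.mem_inter.mp (hsub₁' hx)).1
  have hyC₂ : y ∈ C₂ := (Finset.mem_inter.mp (hsub₂' hy)).1
  -- clDist A B < dist x y ≤ clDist D₁ D₂, contradicting hmin
  obtain ⟨u, hu, v, hv, hAB_eq⟩ := clDist_mem (hDne A hA) (hDne B hB)
  have huv : u ≠ v := by
    intro h
    subst h
    exact (Finset.disjoint_left.mp (hDdisj A hA B hB hAB) hu) hv
  have hlt : dist u v < dist x y :=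
    hmargin u (hDsub A hA hu) v (hDsub B hB hv) x hxW y hyW huv
      ⟨C, hC, hAC hu, hBC hv⟩ ⟨C₁, hC₁, C₂, hC₂, hCeq, hxC₁, hyC₂⟩
  have h₁ : clDist D₁ D₂ ≤ clDist A B := hmin A hA B hB hAB
  have h₂ : dist x y ≤ clDist D₁ D₂ := le_clDist hx hy
  rw [hAB_eq] at h₁
  linarith
end
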